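/- Let λ, ν ∈ ℂ, N, a ∈ ℕ and m ∈ ℤ with |m| ≥ N. Let H(a) be the ℂ-vector space of tuples (ψ_j)_{j=0}^{2N} of homogeneous polynomials of degree a in ℂ[ζ₁,ζ₂,ζ₃] satisfying, for all j = 0,…,2N and all t, θ ∈ ℝ: e^{λt}·ψ_j(ζ₁,ζ₂,ζ₃) = e^{νt}·ψ_j(e^{−t}ζ₁, e^{−t}ζ₂, e^{−t}ζ₃) and e^{i(N−j)θ}·ψ_j(ζ₁,ζ₂,ζ₃) = e^{imθ}·ψ_j(cos θ·ζ₁ + sin θ·ζ₂, −sin θ·ζ₁ + cos θ·ζ₂, ζ₃). Then H(a) ≠ {0} if and only if both a = ν − λ and a ≥ |m| − N. Moreover, when these conditions hold, H(a) is spanned by the tuples Ψ_{k,g} for k ∈ K_{N,m} and g ∈ Pol_{a−k}[t]_even, where Ψ_{k,g} has, if m ≥ N, the component with index k−m+N equal to (T_{a−k}g)·(ζ₁+iζ₂)^k and all other components 0, and, if m ≤ −N, the component with index N−m−k equal to (T_{a−k}g)·(ζ₁−iζ₂)^k and all other components 0. -/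
import Mathlib


noncomputable section

/-- `Pol_ℓ[t]_even`: the span of the monomials `t^(ℓ-2b)`; zero subspace for `ℓ < 0`. -/
def PolEven (l : ℤ) : Submodule ℂ (Polynomial ℂ) :=
  Submodule.span ℂ
    {p : Polynomial ℂ | ∃ b : ℕ, 2 * (b : ℤ) ≤ l ∧ p = Polynomial.X ^ (l - 2 * b).toNat}

/-- The map `T_ℓ`, sending `Σ c_b t^(ℓ-2b)` to `Σ c_b (ζ₁²+ζ₂²)^b ζ₃^(ℓ-2b)`
(zero for `ℓ < 0`). -/
def Tmap (l : ℤ) (g : Polynomial ℂ) : MvPolynomial (Fin 3) ℂ :=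
  if l < 0 then 0 else
    ∑ b ∈ Finset.range (l.toNat / 2 + 1),
      MvPolynomial.C (g.coeff (l.toNat - 2 * b)) *
        (MvPolynomial.X 0 ^ 2 + MvPolynomial.X 1 ^ 2) ^ b *
        MvPolynomial.X 2 ^ (l.toNat - 2 * b)

/-- Substitution `ζ ↦ e^{-t} ζ` on `ℂ[ζ₁,ζ₂,ζ₃]`. -/
def scaleSub (t : ℝ) (p : MvPolynomial (Fin 3) ℂ) : MvPolynomial (Fin 3) ℂ :=
  MvPolynomial.aeval
    (fun i : Fin 3 => MvPolynomial.C (Complex.exp (-(t : ℂ))) * MvPolynomial.X i) p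

/-- Substitution `(ζ₁,ζ₂,ζ₃) ↦ (cos θ ζ₁ + sin θ ζ₂, -sin θ ζ₁ + cos θ ζ₂, ζ₃)`. -/
def rotSub (θ : ℝ) (p : MvPolynomial (Fin 3) ℂ) : MvPolynomial (Fin 3) ℂ :=
  MvPolynomial.aeval
    ![MvPolynomial.C ((Real.cos θ : ℂ)) * MvPolynomial.X 0 +
        MvPolynomial.C ((Real.sin θ : ℂ)) * MvPolynomial.X 1,
      MvPolynomial.C (-(Real.sin θ : ℂ)) * MvPolynomial.X 0 +
        MvPolynomial.C ((Real.cos θ : ℂ)) * MvPolynomial.X 1,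
      MvPolynomial.X 2] p

/-- The index set `K_{N,m}`. -/
def KSet (N : ℕ) (m : ℤ) (k : ℕ) : Prop :=
  ∃ l : ℕ, l ≤ N ∧ ((k : ℤ) = |m - (l : ℤ)| ∨ (k : ℤ) = |m + (l : ℤ)|)

/-- The space `H(a)` of `L'`-equivariant tuples of homogeneous polynomials of
degree `a` in `ℂ[ζ₁,ζ₂,ζ₃]`. -/
def Hspace (lam nu : ℂ) (N : ℕ) (m : ℤ) (a : ℕ) :
    Submodule ℂ (Fin (2 * N + 1) → MvPolynomial (Fin 3) ℂ) where
  carrier := {ψ | ∀ j : Fin (2 * N + 1),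
    (ψ j).IsHomogeneous a ∧
    (∀ t : ℝ, Complex.exp (lam * (t : ℂ)) • ψ j =
      Complex.exp (nu * (t : ℂ)) • scaleSub t (ψ j)) ∧
    (∀ θ : ℝ, Complex.exp (Complex.I * ((N : ℂ) - ((j : ℕ) : ℂ)) * (θ : ℂ)) • ψ j =
      Complex.exp (Complex.I * (m : ℂ) * (θ : ℂ)) • rotSub θ (ψ j))}
  zero_mem' := by
    intro j
    refine ⟨MvPolynomial.isHomogeneous_zero _ _ _, fun t => ?_, fun θ => ?_⟩
    · simp [scaleSub]
    · simp [rotSub]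
  add_mem' := by
    rintro ψ φ hψ hφ j
    obtain ⟨h1, h2, h3⟩ := hψ j
    obtain ⟨h1', h2', h3'⟩ := hφ j
    refine ⟨h1.add h1', fun t => ?_, fun θ => ?_⟩
    · have h := h2 t
      have h' := h2' t
      simp only [Pi.add_apply, smul_add, h, h', scaleSub, map_add]
    · have h := h3 θ
      have h' := h3' θ
      simp only [Pi.add_apply, smul_add, h, h', rotSub, map_add]
  smul_mem' := by
    rintro c ψ hψ j
    obtain ⟨h1, h2, h3⟩ := hψ j
    refine ⟨?_, fun t => ?_, fun θ => ?_⟩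
    · show ((c • ψ) j).IsHomogeneous a
      simp only [Pi.smul_apply, MvPolynomial.smul_eq_C_mul]
      simpa using (MvPolynomial.isHomogeneous_C _ c).mul h1
    · have h := h2 t
      simp only [Pi.smul_apply]
      rw [smul_comm, h, smul_comm]
      congr 1
      simp [scaleSub]
    · have h := h3 θ
      simp only [Pi.smul_apply]
      rw [smul_comm, h, smul_comm]
      congr 1
      simp [rotSub]


-- ===================== auxiliary development =====================
open MvPolynomial Complex

abbrev MvP := MvPolynomial (Fin 3) ℂ

lemma exp_forall_eq_one {z : ℂ} (h : ∀ t : ℝ, Complex.exp (z * t) = 1) : z = 0 := by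
  have hre : z.re = 0 := by
    have h1 := h 1
    have : Real.exp ((z * (1:ℝ)).re) = Real.exp 0 := by
      rw [← Complex.norm_exp, h1]
      simp
    have h2 := Real.exp_injective this
    simpa using h2
  by_contra hz
  have him : z.im ≠ 0 := by
    intro h0; exact hz (Complex.ext hre h0)
  have h2 := h (Real.pi / z.im)
  have hzt : z * ((Real.pi / z.im : ℝ) : ℂ) = Real.pi * Complex.I := by
    apply Complex.ext
    · simp [hre]
    · simp [Complex.mul_im, hre]
      field_simp
  rw [hzt, Complex.exp_pi_mul_I] at h2
  norm_num at h2

/-- coefficients of a diagonal substitution -/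
lemma coeff_diag (c : Fin 3 → ℂ) (p : MvP) (s : Fin 3 →₀ ℕ) :
    MvPolynomial.coeff s (MvPolynomial.aeval (fun i => MvPolynomial.C (c i) * MvPolynomial.X i) p)
      = (∏ i, c i ^ s i) * MvPolynomial.coeff s p := by
  have hmono : ∀ (d : Fin 3 →₀ ℕ) (r : ℂ),
      MvPolynomial.aeval (fun i => MvPolynomial.C (c i) * MvPolynomial.X i)
        (MvPolynomial.monomial d r) = MvPolynomial.monomial d (r * ∏ i, c i ^ d i) := by
    intro d r
    rw [MvPolynomial.aeval_monomial]
    rw [Finsupp.prod_fintype _ _ (fun i => pow_zero _)]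
    simp_rw [mul_pow]
    rw [Finset.prod_mul_distrib]
    have : (∏ i, (MvPolynomial.C (c i) : MvP) ^ d i)
        = MvPolynomial.C (∏ i, c i ^ d i) := by
      rw [map_prod]
      simp [map_pow]
    rw [this]
    rw [MvPolynomial.monomial_eq]
    rw [Finsupp.prod_fintype _ _ (fun i => pow_zero _)]
    simp [algebraMap_eq]
    ring
  conv_lhs => rw [p.as_sum]
  rw [map_sum]
  simp_rw [hmono]
  rw [MvPolynomial.coeff_sum]
  simp_rw [MvPolynomial.coeff_monomial]
  rw [Finset.sum_ite_eq' p.support s]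
  split_ifs with hs
  · ring
  · rw [MvPolynomial.notMem_support_iff] at hs
    rw [hs]; ring

def chg : MvP →ₐ[ℂ] MvP :=
  MvPolynomial.aeval ![MvPolynomial.X 0 + MvPolynomial.C Complex.I * MvPolynomial.X 1,
    MvPolynomial.X 0 - MvPolynomial.C Complex.I * MvPolynomial.X 1, MvPolynomial.X 2]

def invc : MvP →ₐ[ℂ] MvP :=
  MvPolynomial.aeval ![MvPolynomial.C (1/2 : ℂ) * MvPolynomial.X 0 + MvPolynomial.C (1/2 : ℂ) * MvPolynomial.X 1,
    MvPolynomial.C (-Complex.I/2) * MvPolynomial.X 0 + MvPolynomial.C (Complex.I/2) * MvPolynomial.X 1,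
    MvPolynomial.X 2]

lemma comp_ids : chg.comp invc = AlgHom.id ℂ MvP ∧ invc.comp chg = AlgHom.id ℂ MvP := by
  have hC : (MvPolynomial.C (1/2:ℂ) : MvP) + MvPolynomial.C (1/2:ℂ) = 1 := by
    rw [← map_add]; norm_num
  have k1 : (-Complex.I/2 * Complex.I : ℂ) = 1/2 := by
    ring_nf; simp [Complex.I_sq]; norm_num
  have k2 : (Complex.I/2 * Complex.I : ℂ) = -(1/2) := by
    ring_nf; simp [Complex.I_sq]; norm_num
  have k3 : (Complex.I * (-Complex.I/2) : ℂ) = 1/2 := by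
    ring_nf; simp [Complex.I_sq]; norm_num
  have k4 : (Complex.I * (Complex.I/2) : ℂ) = -(1/2) := by
    ring_nf; simp [Complex.I_sq]; norm_num
  have hA : (MvPolynomial.C (-Complex.I/2) : MvP) = -MvPolynomial.C (Complex.I/2) := by
    rw [neg_div, map_neg]
  have hB : (MvPolynomial.C (-(1/2):ℂ) : MvP) = -MvPolynomial.C (1/2:ℂ) := by
    rw [map_neg]
  constructor <;> apply MvPolynomial.algHom_ext <;> intro i <;> fin_cases i <;>
    · simp [chg, invc]
      try simp only [mul_add, add_mul, mul_sub, sub_mul, ← mul_assoc, ← MvPolynomial.C_mul]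
      try norm_num
      try · try simp only [← mul_assoc, ← MvPolynomial.C_mul]
            first
        | (rw [k1, k2, hA, hB]; linear_combination MvPolynomial.X (1 : Fin 3) * hC)
        | (rw [k3, k4, hB]; linear_combination MvPolynomial.X (0 : Fin 3) * hC)
        | (rw [k3, k4, hB]; linear_combination MvPolynomial.X (1 : Fin 3) * hC)
        | linear_combination MvPolynomial.X (0 : Fin 3) * hC

lemma chg_invc (p : MvP) : chg (invc p) = p :=
  congrFun (congrArg DFunLike.coe comp_ids.1) p

lemma invc_chg (p : MvP) : invc (chg p) = p :=
  congrFun (congrArg DFunLike.coe comp_ids.2) p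

lemma chg_inj : Function.Injective chg := by
  intro p q h
  have := congrArg invc h
  rwa [invc_chg, invc_chg] at this

def rotHom (θ : ℝ) : MvP →ₐ[ℂ] MvP :=
  MvPolynomial.aeval
    ![MvPolynomial.C ((Real.cos θ : ℂ)) * MvPolynomial.X 0 +
        MvPolynomial.C ((Real.sin θ : ℂ)) * MvPolynomial.X 1,
      MvPolynomial.C (-(Real.sin θ : ℂ)) * MvPolynomial.X 0 +
        MvPolynomial.C ((Real.cos θ : ℂ)) * MvPolynomial.X 1,
      MvPolynomial.X 2]

lemma rotSub_eq (θ : ℝ) (p : MvP) : rotSub θ p = rotHom θ p := rfl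

def dc (θ : ℝ) : Fin 3 → ℂ := ![Complex.exp (-(θ:ℂ) * Complex.I), Complex.exp ((θ:ℂ) * Complex.I), 1]

def dia (θ : ℝ) : MvP →ₐ[ℂ] MvP :=
  MvPolynomial.aeval (fun i => MvPolynomial.C (dc θ i) * MvPolynomial.X i)

lemma exp_neg_theta (θ : ℝ) :
    Complex.exp (-(θ:ℂ) * Complex.I) = (Real.cos θ : ℂ) - (Real.sin θ : ℂ) * Complex.I := by
  rw [Complex.exp_mul_I]
  rw [Complex.cos_neg, Complex.sin_neg]
  rw [← Complex.ofReal_cos, ← Complex.ofReal_sin]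
  ring

lemma exp_pos_theta (θ : ℝ) :
    Complex.exp ((θ:ℂ) * Complex.I) = (Real.cos θ : ℂ) + (Real.sin θ : ℂ) * Complex.I := by
  rw [Complex.exp_mul_I]
  rw [← Complex.ofReal_cos, ← Complex.ofReal_sin]

lemma rot_chg (θ : ℝ) (p : MvP) : rotSub θ (chg p) = chg (dia θ p) := by
  rw [rotSub_eq]
  have hI : (MvPolynomial.C Complex.I : MvP) ^ 2 = -1 := by
    rw [← map_pow, Complex.I_sq, map_neg, map_one]
  have e1 : MvPolynomial.C (Complex.exp (-(↑θ * Complex.I)))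
      = (MvPolynomial.C ((Real.cos θ:ℂ)) - MvPolynomial.C ((Real.sin θ:ℂ)) * MvPolynomial.C Complex.I : MvP) := by
    rw [← neg_mul, Complex.exp_mul_I, Complex.cos_neg, Complex.sin_neg,
      ← Complex.ofReal_cos, ← Complex.ofReal_sin]
    rw [← map_mul, ← map_sub]
    congr 1
    ring
  have e2 : MvPolynomial.C (Complex.exp ((↑θ * Complex.I)))
      = (MvPolynomial.C ((Real.cos θ:ℂ)) + MvPolynomial.C ((Real.sin θ:ℂ)) * MvPolynomial.C Complex.I : MvP) := by
    rw [Complex.exp_mul_I, ← Complex.ofReal_cos, ← Complex.ofReal_sin, ← map_mul, ← map_add]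
  have : (rotHom θ).comp chg = chg.comp (dia θ) := by
    apply MvPolynomial.algHom_ext
    intro i
    fin_cases i <;>
      · simp [chg, dia, rotHom, dc]
        try simp only [← Complex.ofReal_cos, ← Complex.ofReal_sin]
        try simp only [neg_mul, e1, e2, map_neg]
        try linear_combination (MvPolynomial.X (1 : Fin 3) * MvPolynomial.C ((Real.sin θ : ℂ))) * hI
        try linear_combination (-(MvPolynomial.X (1 : Fin 3)) * MvPolynomial.C ((Real.sin θ : ℂ))) * hI
  exact congrFun (congrArg DFunLike.coe this) p

lemma degree_eq_sum_univ (s : Fin 3 →₀ ℕ) : s.degree = ∑ i, s i := by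
  rw [Finsupp.degree]
  apply Finset.sum_subset (Finset.subset_univ _)
  intro i _ hi
  exact Finsupp.notMem_support_iff.mp hi

lemma isHom_coeff {p : MvP} {a : ℕ} (hp : p.IsHomogeneous a) {s : Fin 3 →₀ ℕ}
    (hs : MvPolynomial.coeff s p ≠ 0) : s 0 + s 1 + s 2 = a := by
  have := hp hs
  rw [Finsupp.weight_apply] at this
  have hdeg : s.degree = a := by
    rw [Finsupp.degree]
    rw [← this]
    apply Finset.sum_congr rfl
    intro i _
    simp
  rw [degree_eq_sum_univ] at hdeg
  rw [Fin.sum_univ_three] at hdeg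
  exact hdeg

lemma scaleSub_homog {p : MvP} {a : ℕ} (hp : p.IsHomogeneous a) (t : ℝ) :
    scaleSub t p = Complex.exp (-(t:ℂ)) ^ a • p := by
  apply MvPolynomial.ext
  intro s
  rw [scaleSub, coeff_diag (fun _ => Complex.exp (-(t:ℂ))) p s]
  rw [MvPolynomial.coeff_smul]
  by_cases hs : MvPolynomial.coeff s p = 0
  · rw [hs]; simp
  · have hdeg := isHom_coeff hp hs
    rw [Finset.prod_pow_eq_pow_sum]
    rw [Fin.sum_univ_three, hdeg]
    rfl

lemma coeff_dia (θ : ℝ) (q : MvP) (s : Fin 3 →₀ ℕ) :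
    MvPolynomial.coeff s (dia θ q)
      = Complex.exp (-(θ:ℂ) * Complex.I) ^ s 0 * Complex.exp ((θ:ℂ) * Complex.I) ^ s 1
        * MvPolynomial.coeff s q := by
  rw [dia, coeff_diag (dc θ) q s, Fin.prod_univ_three]
  simp [dc]

lemma invc_homog {p : MvP} {a : ℕ} (hp : p.IsHomogeneous a) : (invc p).IsHomogeneous a := by
  have := hp.aeval (![MvPolynomial.C (1/2 : ℂ) * MvPolynomial.X 0 + MvPolynomial.C (1/2 : ℂ) * MvPolynomial.X 1,
    MvPolynomial.C (-Complex.I/2) * MvPolynomial.X 0 + MvPolynomial.C (Complex.I/2) * MvPolynomial.X 1,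
    MvPolynomial.X 2] : Fin 3 → MvP) (n := 1) ?_
  · simpa [invc] using this
  · intro i
    fin_cases i
    · exact (MvPolynomial.isHomogeneous_C_mul_X _ _).add (MvPolynomial.isHomogeneous_C_mul_X _ _)
    · exact (MvPolynomial.isHomogeneous_C_mul_X _ _).add (MvPolynomial.isHomogeneous_C_mul_X _ _)
    · exact MvPolynomial.isHomogeneous_X _ _


lemma C_exp_neg (θ : ℝ) : (MvPolynomial.C (Complex.exp (-(θ:ℂ) * Complex.I)) : MvP)
    = MvPolynomial.C ((Real.cos θ:ℂ)) - MvPolynomial.C ((Real.sin θ:ℂ)) * MvPolynomial.C Complex.I := by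
  rw [Complex.exp_mul_I, Complex.cos_neg, Complex.sin_neg,
    ← Complex.ofReal_cos, ← Complex.ofReal_sin]
  rw [← map_mul, ← map_sub]
  congr 1
  ring

lemma CI_sq : (MvPolynomial.C Complex.I : MvP) ^ 2 = -1 := by
  rw [← map_pow, Complex.I_sq, map_neg, map_one]

lemma C_cos_sq_add_sin_sq (θ : ℝ) :
    (MvPolynomial.C ((Real.cos θ:ℂ)) : MvP) ^ 2 + MvPolynomial.C ((Real.sin θ:ℂ)) ^ 2 = 1 := by
  rw [← map_pow, ← map_pow, ← map_add]
  have : ((Real.cos θ:ℂ)) ^ 2 + ((Real.sin θ:ℂ)) ^ 2 = 1 := by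
    have := Real.sin_sq_add_cos_sq θ
    push_cast
    exact_mod_cast by linear_combination (this : Real.sin θ ^2 + Real.cos θ ^2 = 1)
  rw [this, map_one]

lemma rotSub_r2 (θ : ℝ) : rotSub θ (MvPolynomial.X 0 ^ 2 + MvPolynomial.X 1 ^ 2 : MvP)
    = MvPolynomial.X 0 ^ 2 + MvPolynomial.X 1 ^ 2 := by
  rw [rotSub_eq]
  have hcs := C_cos_sq_add_sin_sq θ
  simp [rotHom]
  try simp only [← Complex.ofReal_cos, ← Complex.ofReal_sin]
  linear_combination (MvPolynomial.X (0:Fin 3) ^ 2 + MvPolynomial.X (1:Fin 3) ^ 2) * hcs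

lemma rotSub_X2 (θ : ℝ) : rotSub θ (MvPolynomial.X 2 : MvP) = MvPolynomial.X 2 := by
  rw [rotSub_eq]; simp [rotHom]

lemma rotSub_u (θ : ℝ) : rotSub θ (MvPolynomial.X 0 + MvPolynomial.C Complex.I * MvPolynomial.X 1 : MvP)
    = MvPolynomial.C (Complex.exp (-(θ:ℂ) * Complex.I)) *
      (MvPolynomial.X 0 + MvPolynomial.C Complex.I * MvPolynomial.X 1) := by
  rw [rotSub_eq, C_exp_neg]
  have hI := CI_sq
  simp [rotHom]
  try simp only [← Complex.ofReal_cos, ← Complex.ofReal_sin]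
  linear_combination (MvPolynomial.X (1:Fin 3) * MvPolynomial.C ((Real.sin θ:ℂ))) * hI

lemma rotSub_v (θ : ℝ) : rotSub θ (MvPolynomial.X 0 - MvPolynomial.C Complex.I * MvPolynomial.X 1 : MvP)
    = MvPolynomial.C (Complex.exp ((θ:ℂ) * Complex.I)) *
      (MvPolynomial.X 0 - MvPolynomial.C Complex.I * MvPolynomial.X 1) := by
  rw [rotSub_eq]
  have e2 : (MvPolynomial.C (Complex.exp ((θ:ℂ) * Complex.I)) : MvP)
      = MvPolynomial.C ((Real.cos θ:ℂ)) + MvPolynomial.C ((Real.sin θ:ℂ)) * MvPolynomial.C Complex.I := by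
    rw [Complex.exp_mul_I, ← Complex.ofReal_cos, ← Complex.ofReal_sin, ← map_mul, ← map_add]
  rw [e2]
  have hI := CI_sq
  simp [rotHom]
  try simp only [← Complex.ofReal_cos, ← Complex.ofReal_sin]
  linear_combination (MvPolynomial.X (1:Fin 3) * MvPolynomial.C ((Real.sin θ:ℂ))) * hI

lemma rotSub_Tmap (θ : ℝ) (l : ℤ) (g : Polynomial ℂ) : rotSub θ (Tmap l g) = Tmap l g := by
  rw [Tmap]
  split_ifs with hl
  · rw [rotSub_eq, map_zero]
  · rw [rotSub_eq, map_sum]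
    apply Finset.sum_congr rfl
    intro b _
    rw [map_mul, map_mul, map_pow, map_pow]
    rw [show (rotHom θ) (MvPolynomial.X 0 ^ 2 + MvPolynomial.X 1 ^ 2 : MvP) = _ from rotSub_r2 θ]
    rw [show (rotHom θ) (MvPolynomial.X 2 : MvP) = _ from rotSub_X2 θ]
    rw [show (rotHom θ) (MvPolynomial.C (g.coeff (l.toNat - 2 * b)) : MvP)
      = MvPolynomial.C (g.coeff (l.toNat - 2 * b)) from MvPolynomial.aeval_C _ _]

lemma Tmap_homog (l : ℤ) (g : Polynomial ℂ) : (Tmap l g).IsHomogeneous l.toNat := by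
  rw [Tmap]
  split_ifs with hl
  · exact MvPolynomial.isHomogeneous_zero _ _ _
  · apply MvPolynomial.IsHomogeneous.sum
    intro b hb
    have hble : 2 * b ≤ l.toNat := by
      rw [Finset.mem_range] at hb
      omega
    have h1 : (MvPolynomial.C (g.coeff (l.toNat - 2 * b)) : MvP).IsHomogeneous 0 :=
      MvPolynomial.isHomogeneous_C _ _
    have h2 : ((MvPolynomial.X 0 ^ 2 + MvPolynomial.X 1 ^ 2 : MvP) ^ b).IsHomogeneous (2 * b) := by
      have : (MvPolynomial.X 0 ^ 2 + MvPolynomial.X 1 ^ 2 : MvP).IsHomogeneous 2 := by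
        exact (MvPolynomial.isHomogeneous_X_pow _ _).add (MvPolynomial.isHomogeneous_X_pow _ _)
      exact this.pow b
    have h3 : ((MvPolynomial.X 2 : MvP) ^ (l.toNat - 2 * b)).IsHomogeneous (l.toNat - 2 * b) :=
      MvPolynomial.isHomogeneous_X_pow _ _
    have := (h1.mul h2).mul h3
    convert this using 1
    omega

lemma u_homog : (MvPolynomial.X 0 + MvPolynomial.C Complex.I * MvPolynomial.X 1 : MvP).IsHomogeneous 1 :=
  (MvPolynomial.isHomogeneous_X _ _).add (MvPolynomial.isHomogeneous_C_mul_X _ _)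

lemma v_homog : (MvPolynomial.X 0 - MvPolynomial.C Complex.I * MvPolynomial.X 1 : MvP).IsHomogeneous 1 := by
  rw [sub_eq_add_neg, ← neg_mul, ← map_neg]
  exact (MvPolynomial.isHomogeneous_X _ _).add (MvPolynomial.isHomogeneous_C_mul_X _ _)


lemma mem_Hspace_iff {lam nu : ℂ} {N : ℕ} {m : ℤ} {a : ℕ} {ψ : Fin (2*N+1) → MvP} :
    ψ ∈ Hspace lam nu N m a ↔ ∀ j : Fin (2 * N + 1),
    (ψ j).IsHomogeneous a ∧
    (∀ t : ℝ, Complex.exp (lam * (t : ℂ)) • ψ j =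
      Complex.exp (nu * (t : ℂ)) • scaleSub t (ψ j)) ∧
    (∀ θ : ℝ, Complex.exp (Complex.I * ((N : ℂ) - ((j : ℕ) : ℂ)) * (θ : ℂ)) • ψ j =
      Complex.exp (Complex.I * (m : ℂ) * (θ : ℂ)) • rotSub θ (ψ j)) := Iff.rfl

lemma P_homog (a k : ℕ) (g : Polynomial ℂ) (e : MvP) (he : e.IsHomogeneous 1) :
    (Tmap ((a:ℤ)-k) g * e ^ k).IsHomogeneous a := by
  by_cases h : (a:ℤ) - k < 0
  · rw [Tmap, if_pos h, zero_mul]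
    exact MvPolynomial.isHomogeneous_zero _ _ _
  · have := (Tmap_homog ((a:ℤ)-k) g).mul (he.pow k)
    convert this using 1
    omega

lemma scale_cond {lam nu : ℂ} {a : ℕ} (hln : nu - lam = (a:ℂ)) {P : MvP}
    (hP : P.IsHomogeneous a) (t : ℝ) :
    Complex.exp (lam * (t : ℂ)) • P = Complex.exp (nu * (t : ℂ)) • scaleSub t P := by
  rw [scaleSub_homog hP, smul_smul]
  congr 1
  rw [← Complex.exp_nat_mul, ← Complex.exp_add]
  congr 1
  push_cast
  linear_combination (-(t:ℂ)) * hln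

lemma rotSub_P_u (θ : ℝ) (l : ℤ) (g : Polynomial ℂ) (k : ℕ) :
    rotSub θ (Tmap l g * (MvPolynomial.X 0 + MvPolynomial.C Complex.I * MvPolynomial.X 1) ^ k)
      = Complex.exp (-(θ:ℂ) * Complex.I) ^ k •
        (Tmap l g * (MvPolynomial.X 0 + MvPolynomial.C Complex.I * MvPolynomial.X 1) ^ k) := by
  rw [rotSub_eq, map_mul, map_pow]
  rw [show (rotHom θ) (Tmap l g) = Tmap l g from rotSub_Tmap θ l g]
  rw [show (rotHom θ) (MvPolynomial.X 0 + MvPolynomial.C Complex.I * MvPolynomial.X 1 : MvP)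
    = _ from rotSub_u θ]
  rw [mul_pow, ← map_pow, MvPolynomial.smul_eq_C_mul]
  ring

lemma rotSub_P_v (θ : ℝ) (l : ℤ) (g : Polynomial ℂ) (k : ℕ) :
    rotSub θ (Tmap l g * (MvPolynomial.X 0 - MvPolynomial.C Complex.I * MvPolynomial.X 1) ^ k)
      = Complex.exp ((θ:ℂ) * Complex.I) ^ k •
        (Tmap l g * (MvPolynomial.X 0 - MvPolynomial.C Complex.I * MvPolynomial.X 1) ^ k) := by
  rw [rotSub_eq, map_mul, map_pow]
  rw [show (rotHom θ) (Tmap l g) = Tmap l g from rotSub_Tmap θ l g]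
  rw [show (rotHom θ) (MvPolynomial.X 0 - MvPolynomial.C Complex.I * MvPolynomial.X 1 : MvP)
    = _ from rotSub_v θ]
  rw [mul_pow, ← map_pow, MvPolynomial.smul_eq_C_mul]
  ring

lemma gen_mem_u (lam nu : ℂ) (N a : ℕ) (m : ℤ) (hln : nu - lam = (a:ℂ)) (k : ℕ)
    (g : Polynomial ℂ) :
    (fun j : Fin (2 * N + 1) =>
      if ((j : ℕ) : ℤ) = (k : ℤ) - m + N then
        Tmap ((a : ℤ) - k) g *
          (MvPolynomial.X 0 + MvPolynomial.C Complex.I * MvPolynomial.X 1) ^ k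
      else 0) ∈ Hspace lam nu N m a := by
  rw [mem_Hspace_iff]
  intro j
  by_cases hj : ((j : ℕ) : ℤ) = (k : ℤ) - m + N
  · simp only [if_pos hj]
    have hPhom := P_homog a k g _ u_homog
    refine ⟨hPhom, fun t => scale_cond hln hPhom t, fun θ => ?_⟩
    rw [rotSub_P_u, smul_smul]
    congr 1
    rw [← Complex.exp_nat_mul, ← Complex.exp_add]
    congr 1
    have hj' : ((j : ℕ) : ℂ) = (k : ℂ) - (m : ℂ) + (N : ℂ) := by exact_mod_cast hj
    push_cast
    linear_combination (-Complex.I * (θ:ℂ)) * hj'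
  · simp only [if_neg hj]
    refine ⟨MvPolynomial.isHomogeneous_zero _ _ _, fun t => ?_, fun θ => ?_⟩
    · rw [show scaleSub t (0 : MvP) = 0 from map_zero _, smul_zero, smul_zero]
    · rw [show rotSub θ (0 : MvP) = 0 from map_zero (rotHom θ), smul_zero, smul_zero]

lemma gen_mem_v (lam nu : ℂ) (N a : ℕ) (m : ℤ) (hln : nu - lam = (a:ℂ)) (k : ℕ)
    (g : Polynomial ℂ) :
    (fun j : Fin (2 * N + 1) =>
      if ((j : ℕ) : ℤ) = (N : ℤ) - m - k then
        Tmap ((a : ℤ) - k) g *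
          (MvPolynomial.X 0 - MvPolynomial.C Complex.I * MvPolynomial.X 1) ^ k
      else 0) ∈ Hspace lam nu N m a := by
  rw [mem_Hspace_iff]
  intro j
  by_cases hj : ((j : ℕ) : ℤ) = (N : ℤ) - m - k
  · simp only [if_pos hj]
    have hPhom := P_homog a k g _ v_homog
    refine ⟨hPhom, fun t => scale_cond hln hPhom t, fun θ => ?_⟩
    rw [rotSub_P_v, smul_smul]
    congr 1
    rw [← Complex.exp_nat_mul, ← Complex.exp_add]
    congr 1
    have hj' : ((j : ℕ) : ℂ) = (N : ℂ) - (m : ℂ) - (k : ℂ) := by exact_mod_cast hj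
    push_cast
    linear_combination (-Complex.I * (θ:ℂ)) * hj'
  · simp only [if_neg hj]
    refine ⟨MvPolynomial.isHomogeneous_zero _ _ _, fun t => ?_, fun θ => ?_⟩
    · rw [show scaleSub t (0 : MvP) = 0 from map_zero _, smul_zero, smul_zero]
    · rw [show rotSub θ (0 : MvP) = 0 from map_zero (rotHom θ), smul_zero, smul_zero]


lemma Tmap_zero (l : ℤ) : Tmap l 0 = 0 := by
  rw [Tmap]
  split_ifs
  · rfl
  · simp

lemma uv_prod : (MvPolynomial.X 0 + MvPolynomial.C Complex.I * MvPolynomial.X 1 : MvP) *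
    (MvPolynomial.X 0 - MvPolynomial.C Complex.I * MvPolynomial.X 1)
    = MvPolynomial.X 0 ^ 2 + MvPolynomial.X 1 ^ 2 := by
  linear_combination (-(MvPolynomial.X (1:Fin 3) ^ 2)) * CI_sq

lemma eigen_u (a k : ℕ) (p : MvP) (hp : p.IsHomogeneous a)
    (hrot : ∀ θ : ℝ, rotSub θ p = Complex.exp (Complex.I * (-(k:ℂ)) * (θ:ℂ)) • p) :
    ∃ g ∈ PolEven ((a:ℤ) - k),
      p = Tmap ((a:ℤ) - k) g * (MvPolynomial.X 0 + MvPolynomial.C Complex.I * MvPolynomial.X 1) ^ k := by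
  set q := invc p with hqdef
  have hqc : chg q = p := chg_invc p
  have hq : q.IsHomogeneous a := invc_homog hp
  have hdia : ∀ θ : ℝ, dia θ q = Complex.exp (Complex.I * (-(k:ℂ)) * (θ:ℂ)) • q := by
    intro θ
    apply chg_inj
    rw [map_smul, ← rot_chg θ q, hqc, hrot θ]
  have hsupp : ∀ s : Fin 3 →₀ ℕ, MvPolynomial.coeff s q ≠ 0 → s 0 = s 1 + k := by
    intro s hs
    have h2 : ∀ θ : ℝ, Complex.exp ((((s 1 : ℂ) - (s 0 : ℂ) + (k:ℂ)) * Complex.I) * (θ:ℂ)) = 1 := by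
      intro θ
      have h1 := congrArg (MvPolynomial.coeff s) (hdia θ)
      rw [coeff_dia, MvPolynomial.coeff_smul, smul_eq_mul] at h1
      rw [← Complex.exp_nat_mul, ← Complex.exp_nat_mul, ← Complex.exp_add] at h1
      have h3 := mul_right_cancel₀ hs h1
      have h4 : Complex.exp ((((s 1:ℂ) - (s 0:ℂ) + (k:ℂ)) * Complex.I) * (θ:ℂ))
          = Complex.exp ((s 0 : ℕ) * (-(θ:ℂ) * Complex.I) + (s 1 : ℕ) * ((θ:ℂ) * Complex.I)) *
            Complex.exp (-(Complex.I * (-(k:ℂ)) * (θ:ℂ))) := by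
        rw [← Complex.exp_add]; congr 1; push_cast; ring
      rw [h4, h3, ← Complex.exp_add, add_neg_cancel, Complex.exp_zero]
    have h5 := exp_forall_eq_one (z := ((s 1:ℂ) - (s 0:ℂ) + (k:ℂ)) * Complex.I) h2
    have h6 : ((s 1:ℂ) - (s 0:ℂ) + (k:ℂ)) = 0 := by
      by_contra h
      exact (mul_ne_zero h Complex.I_ne_zero) h5
    have h7 : (s 1 : ℤ) - (s 0 : ℤ) + (k : ℤ) = 0 := by exact_mod_cast h6
    omega
  by_cases hka : k ≤ a
  · -- reconstruction
    set M := (a - k) / 2 + 1 with hM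
    set sB : ℕ → (Fin 3 →₀ ℕ) := fun b => Finsupp.equivFunOnFinite.symm ![b + k, b, a - k - 2*b]
      with hsB
    have hsB_app : ∀ b, sB b 0 = b + k ∧ sB b 1 = b ∧ sB b 2 = a - k - 2*b := by
      intro b
      refine ⟨?_, ?_, ?_⟩ <;> simp [hsB]
    have hqe : q = ∑ b ∈ Finset.range M, MvPolynomial.monomial (sB b) (MvPolynomial.coeff (sB b) q) := by
      apply MvPolynomial.ext
      intro s
      rw [MvPolynomial.coeff_sum]
      by_cases hcs : MvPolynomial.coeff s q = 0
      · rw [hcs]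
        symm
        apply Finset.sum_eq_zero
        intro b _
        rw [MvPolynomial.coeff_monomial]
        split_ifs with h
        · rw [h, hcs]
        · rfl
      · have h0 := hsupp s hcs
        have hsum := isHom_coeff hq hcs
        have hb0M : s 1 ∈ Finset.range M := by rw [Finset.mem_range]; omega
        have hseq : sB (s 1) = s := by
          apply DFunLike.ext
          intro i
          obtain ⟨e0, e1, e2⟩ := hsB_app (s 1)
          fin_cases i
          · show sB (s 1) 0 = s 0
            omega
          · show sB (s 1) 1 = s 1
            omega
          · show sB (s 1) 2 = s 2
            omega
        rw [Finset.sum_eq_single (s 1)]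
        · rw [MvPolynomial.coeff_monomial, if_pos hseq, hseq]
        · intro b _ hbne
          rw [MvPolynomial.coeff_monomial, if_neg]
          intro hEq
          apply hbne
          have := congrArg (fun f : Fin 3 →₀ ℕ => f 1) hEq
          simpa [(hsB_app b).2.1] using this
        · intro h
          exact absurd hb0M h
    set g : Polynomial ℂ := ∑ b ∈ Finset.range M,
      Polynomial.C (MvPolynomial.coeff (sB b) q) * Polynomial.X ^ (a - k - 2*b) with hg
    have hgmem : g ∈ PolEven ((a:ℤ) - k) := by
      rw [hg]
      apply Submodule.sum_mem
      intro b hb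
      rw [Finset.mem_range] at hb
      rw [← Polynomial.smul_eq_C_mul]
      apply Submodule.smul_mem
      apply Submodule.subset_span
      refine ⟨b, by omega, ?_⟩
      congr 1
      omega
    have hgcoeff : ∀ b ∈ Finset.range M, g.coeff (a - k - 2*b) = MvPolynomial.coeff (sB b) q := by
      intro b hb
      rw [Finset.mem_range] at hb
      rw [hg, Polynomial.finset_sum_coeff]
      rw [Finset.sum_eq_single b]
      · simp [Polynomial.coeff_C_mul, Polynomial.coeff_X_pow]
      · intro b' hb' hne
        rw [Finset.mem_range] at hb'
        rw [Polynomial.coeff_C_mul, Polynomial.coeff_X_pow, if_neg (by omega), mul_zero]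
      · intro h
        exact absurd (Finset.mem_range.mpr hb) h
    have hmono : ∀ b (r : ℂ), chg (MvPolynomial.monomial (sB b) r)
        = MvPolynomial.C r * ((MvPolynomial.X 0 ^ 2 + MvPolynomial.X 1 ^ 2) ^ b *
            MvPolynomial.X 2 ^ (a - k - 2*b)) *
          (MvPolynomial.X 0 + MvPolynomial.C Complex.I * MvPolynomial.X 1) ^ k := by
      intro b r
      have hm : MvPolynomial.monomial (sB b) r
          = MvPolynomial.C r * MvPolynomial.X 0 ^ (b + k) * MvPolynomial.X 1 ^ b *
            MvPolynomial.X 2 ^ (a - k - 2*b) := by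
        rw [MvPolynomial.monomial_eq]
        rw [Finsupp.prod_fintype _ _ (fun i => pow_zero _)]
        rw [Fin.prod_univ_three]
        obtain ⟨e0, e1, e2⟩ := hsB_app b
        rw [e0, e1, e2]
        ring
      rw [hm]
      rw [map_mul, map_mul, map_mul, map_pow, map_pow, map_pow]
      rw [show chg (MvPolynomial.C r) = MvPolynomial.C r from MvPolynomial.aeval_C _ _]
      rw [show chg (MvPolynomial.X 0) =
        MvPolynomial.X 0 + MvPolynomial.C Complex.I * MvPolynomial.X 1 from by simp [chg]]
      rw [show chg (MvPolynomial.X 1) =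
        MvPolynomial.X 0 - MvPolynomial.C Complex.I * MvPolynomial.X 1 from by simp [chg]]
      rw [show chg (MvPolynomial.X 2) = MvPolynomial.X 2 from by simp [chg]]
      rw [pow_add]
      rw [show ((MvPolynomial.X 0 ^ 2 + MvPolynomial.X 1 ^ 2 : MvP)) ^ b
        = ((MvPolynomial.X 0 + MvPolynomial.C Complex.I * MvPolynomial.X 1) *
            (MvPolynomial.X 0 - MvPolynomial.C Complex.I * MvPolynomial.X 1)) ^ b from by
        rw [uv_prod]]
      rw [mul_pow]
      ring
    refine ⟨g, hgmem, ?_⟩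
    have htn : ((a:ℤ) - k).toNat = a - k := by omega
    rw [Tmap, if_neg (by omega), htn]
    rw [← hqc, hqe, map_sum]
    rw [Finset.sum_mul]
    rw [show (a - k) / 2 + 1 = M from rfl]
    apply Finset.sum_congr rfl
    intro b hb
    rw [hmono b]
    rw [hgcoeff b hb]
    ring
  · -- k > a : q = 0
    have hq0 : q = 0 := by
      apply MvPolynomial.ext
      intro s
      rw [MvPolynomial.coeff_zero]
      by_contra hcs
      have h0 := hsupp s hcs
      have hsum := isHom_coeff hq hcs
      omega
    refine ⟨0, Submodule.zero_mem _, ?_⟩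
    rw [Tmap_zero, zero_mul, ← hqc, hq0, map_zero]

def tau : MvP →ₐ[ℂ] MvP :=
  MvPolynomial.aeval ![MvPolynomial.X 0, -MvPolynomial.X 1, MvPolynomial.X 2]

lemma tau_tau (p : MvP) : tau (tau p) = p := by
  have : tau.comp tau = AlgHom.id ℂ MvP := by
    apply MvPolynomial.algHom_ext
    intro i
    fin_cases i <;> simp [tau]
  exact congrFun (congrArg DFunLike.coe this) p

lemma tau_homog {p : MvP} {a : ℕ} (hp : p.IsHomogeneous a) : (tau p).IsHomogeneous a := by
  have := hp.aeval (![MvPolynomial.X 0, -MvPolynomial.X 1, MvPolynomial.X 2] : Fin 3 → MvP)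
    (n := 1) ?_
  · simpa [tau] using this
  · intro i
    fin_cases i
    · exact MvPolynomial.isHomogeneous_X _ _
    · exact (MvPolynomial.isHomogeneous_X _ _).neg
    · exact MvPolynomial.isHomogeneous_X _ _

lemma rot_tau (θ : ℝ) (p : MvP) : rotSub θ (tau p) = tau (rotSub (-θ) p) := by
  rw [rotSub_eq, rotSub_eq]
  have : (rotHom θ).comp tau = tau.comp (rotHom (-θ)) := by
    apply MvPolynomial.algHom_ext
    intro i
    fin_cases i <;>
      · simp [tau, rotHom, Real.cos_neg, Real.sin_neg]
        try ring
  exact congrFun (congrArg DFunLike.coe this) p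

lemma tau_Tmap (l : ℤ) (g : Polynomial ℂ) : tau (Tmap l g) = Tmap l g := by
  rw [Tmap]
  split_ifs with hl
  · rw [map_zero]
  · rw [map_sum]
    apply Finset.sum_congr rfl
    intro b _
    rw [map_mul, map_mul, map_pow, map_pow]
    rw [show tau (MvPolynomial.C (g.coeff (l.toNat - 2 * b)) : MvP)
      = MvPolynomial.C (g.coeff (l.toNat - 2 * b)) from MvPolynomial.aeval_C _ _]
    rw [show tau (MvPolynomial.X 0 ^ 2 + MvPolynomial.X 1 ^ 2 : MvP)
      = MvPolynomial.X 0 ^ 2 + MvPolynomial.X 1 ^ 2 from by simp [tau]]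
    rw [show tau (MvPolynomial.X 2 : MvP) = MvPolynomial.X 2 from by simp [tau]]

lemma tau_u : tau (MvPolynomial.X 0 + MvPolynomial.C Complex.I * MvPolynomial.X 1 : MvP)
    = MvPolynomial.X 0 - MvPolynomial.C Complex.I * MvPolynomial.X 1 := by
  simp [tau]
  ring

lemma eigen_v (a k : ℕ) (p : MvP) (hp : p.IsHomogeneous a)
    (hrot : ∀ θ : ℝ, rotSub θ p = Complex.exp (Complex.I * (k:ℂ) * (θ:ℂ)) • p) :
    ∃ g ∈ PolEven ((a:ℤ) - k),
      p = Tmap ((a:ℤ) - k) g * (MvPolynomial.X 0 - MvPolynomial.C Complex.I * MvPolynomial.X 1) ^ k := by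
  have hp' : (tau p).IsHomogeneous a := tau_homog hp
  have hrot' : ∀ θ : ℝ, rotSub θ (tau p) = Complex.exp (Complex.I * (-(k:ℂ)) * (θ:ℂ)) • tau p := by
    intro θ
    rw [rot_tau, hrot (-θ), map_smul]
    congr 2
    push_cast
    ring
  obtain ⟨g, hgmem, hgeq⟩ := eigen_u a k (tau p) hp' hrot'
  refine ⟨g, hgmem, ?_⟩
  have := congrArg tau hgeq
  rw [tau_tau, map_mul, map_pow, tau_Tmap, tau_u] at this
  exact this


lemma rot_flip {x : MvP} {N : ℕ} {j : ℕ} {m : ℤ}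
    (h : ∀ θ : ℝ, Complex.exp (Complex.I * ((N : ℂ) - (j : ℂ)) * (θ:ℂ)) • x
      = Complex.exp (Complex.I * (m : ℂ) * (θ:ℂ)) • rotSub θ x) (c : ℤ)
    (hc : (c:ℂ) = (N : ℂ) - (j : ℂ) - (m:ℂ)) :
    ∀ θ : ℝ, rotSub θ x = Complex.exp (Complex.I * (c : ℂ) * (θ:ℂ)) • x := by
  intro θ
  have hBne : Complex.exp (Complex.I * (m : ℂ) * (θ:ℂ)) ≠ 0 := Complex.exp_ne_zero _
  have h2 := congrArg (fun y => (Complex.exp (Complex.I * (m : ℂ) * (θ:ℂ)))⁻¹ • y) (h θ)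
  simp only [smul_smul, inv_mul_cancel₀ hBne, one_smul] at h2
  rw [← h2]
  congr 1
  rw [← Complex.exp_neg, ← Complex.exp_add]
  congr 1
  linear_combination (-Complex.I * (θ:ℂ)) * hc

lemma Tmap_X_pow (l : ℕ) : Tmap (l : ℤ) (Polynomial.X ^ l) = MvPolynomial.X 2 ^ l := by
  rw [Tmap, if_neg (by omega), Int.toNat_natCast]
  rw [Finset.sum_eq_single 0]
  · simp
  · intro b hb hbne
    rw [Finset.mem_range] at hb
    rw [Polynomial.coeff_X_pow, if_neg (by omega)]
    simp
  · intro h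
    simp at h

lemma u_ne_zero : (MvPolynomial.X 0 + MvPolynomial.C Complex.I * MvPolynomial.X 1 : MvP) ≠ 0 := by
  intro h
  have := congrArg (MvPolynomial.eval (![1, 0, 0] : Fin 3 → ℂ)) h
  simp at this

lemma v_ne_zero : (MvPolynomial.X 0 - MvPolynomial.C Complex.I * MvPolynomial.X 1 : MvP) ≠ 0 := by
  intro h
  have := congrArg (MvPolynomial.eval (![1, 0, 0] : Fin 3 → ℂ)) h
  simp at this

lemma span_eq_u (lam nu : ℂ) (N a : ℕ) (m : ℤ) (hmN : (N : ℤ) ≤ m) (hln : nu - lam = (a : ℂ)) :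
    Hspace lam nu N m a = Submodule.span ℂ
      {ψ : Fin (2 * N + 1) → MvPolynomial (Fin 3) ℂ |
        ∃ k : ℕ, KSet N m k ∧ ∃ g ∈ PolEven ((a : ℤ) - k),
          ψ = fun j : Fin (2 * N + 1) =>
            if ((j : ℕ) : ℤ) = (k : ℤ) - m + N then
              Tmap ((a : ℤ) - k) g *
                (MvPolynomial.X 0 + MvPolynomial.C Complex.I * MvPolynomial.X 1) ^ k
            else 0} := by
  apply le_antisymm
  · intro ψ hψ
    rw [mem_Hspace_iff] at hψ
    have hdecomp : ψ = ∑ j : Fin (2 * N + 1), Pi.single j (ψ j) :=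
      (Finset.univ_sum_single ψ).symm
    rw [hdecomp]
    apply Submodule.sum_mem
    intro j _
    by_cases hj0 : ψ j = 0
    · rw [hj0, Pi.single_zero]
      exact Submodule.zero_mem _
    · obtain ⟨hhom, hsc, hrot⟩ := hψ j
      have hj2N : (j : ℕ) < 2 * N + 1 := j.isLt
      set k : ℕ := (m - N + (j : ℕ)).toNat with hk
      have hkz : (k : ℤ) = m - (N:ℤ) + ((j : ℕ):ℤ) := Int.toNat_of_nonneg (by omega)
      have hkc : (k : ℂ) = (m : ℂ) - (N : ℂ) + ((j : ℕ) : ℂ) := by exact_mod_cast hkz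
      have hrot' : ∀ θ : ℝ, rotSub θ (ψ j)
          = Complex.exp (Complex.I * (-(k:ℂ)) * (θ:ℂ)) • ψ j := by
        have h0 := rot_flip hrot ((N:ℤ) - (j:ℕ) - m) (by push_cast; ring)
        have hcast : ((((N:ℤ) - ((j:ℕ):ℤ) - m) : ℤ) : ℂ) = -(k:ℂ) := by
          push_cast
          linear_combination hkc
        intro θ
        rw [h0 θ, hcast]
      obtain ⟨g, hgmem, hgeq⟩ := eigen_u a k (ψ j) hhom hrot'
      apply Submodule.subset_span
      refine ⟨k, ?_, g, hgmem, ?_⟩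
      · by_cases hjN : (j : ℕ) ≤ N
        · refine ⟨N - (j : ℕ), by omega, Or.inl ?_⟩
          have hcast : ((N - (j : ℕ) : ℕ) : ℤ) = (N:ℤ) - ((j:ℕ):ℤ) := by omega
          rw [hcast, _root_.abs_of_nonneg (by omega)]
          omega
        · refine ⟨(j : ℕ) - N, by omega, Or.inr ?_⟩
          have hcast : (((j : ℕ) - N : ℕ) : ℤ) = ((j:ℕ):ℤ) - (N:ℤ) := by omega
          rw [hcast, _root_.abs_of_nonneg (by omega)]
          omega
      · funext j'
        by_cases hjj : j' = j
        · rw [hjj, Pi.single_eq_same, if_pos (by omega)]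
          exact hgeq
        · rw [Pi.single_eq_of_ne hjj, if_neg]
          intro hEq
          apply hjj
          apply Fin.ext
          omega
  · rw [Submodule.span_le]
    rintro ψ ⟨k, -, g, -, rfl⟩
    exact gen_mem_u lam nu N a m hln k g

lemma span_eq_v (lam nu : ℂ) (N a : ℕ) (m : ℤ) (hmN : m ≤ -(N : ℤ)) (hln : nu - lam = (a : ℂ)) :
    Hspace lam nu N m a = Submodule.span ℂ
      {ψ : Fin (2 * N + 1) → MvPolynomial (Fin 3) ℂ |
        ∃ k : ℕ, KSet N m k ∧ ∃ g ∈ PolEven ((a : ℤ) - k),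
          ψ = fun j : Fin (2 * N + 1) =>
            if ((j : ℕ) : ℤ) = (N : ℤ) - m - k then
              Tmap ((a : ℤ) - k) g *
                (MvPolynomial.X 0 - MvPolynomial.C Complex.I * MvPolynomial.X 1) ^ k
            else 0} := by
  apply le_antisymm
  · intro ψ hψ
    rw [mem_Hspace_iff] at hψ
    have hdecomp : ψ = ∑ j : Fin (2 * N + 1), Pi.single j (ψ j) :=
      (Finset.univ_sum_single ψ).symm
    rw [hdecomp]
    apply Submodule.sum_mem
    intro j _
    by_cases hj0 : ψ j = 0
    · rw [hj0, Pi.single_zero]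
      exact Submodule.zero_mem _
    · obtain ⟨hhom, hsc, hrot⟩ := hψ j
      have hj2N : (j : ℕ) < 2 * N + 1 := j.isLt
      set k : ℕ := ((N:ℤ) - (j : ℕ) - m).toNat with hk
      have hkz : (k : ℤ) = (N:ℤ) - ((j : ℕ):ℤ) - m := Int.toNat_of_nonneg (by omega)
      have hkc : (k : ℂ) = (N : ℂ) - ((j : ℕ) : ℂ) - (m : ℂ) := by exact_mod_cast hkz
      have hrot' : ∀ θ : ℝ, rotSub θ (ψ j)
          = Complex.exp (Complex.I * ((k:ℂ)) * (θ:ℂ)) • ψ j := by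
        have h0 := rot_flip hrot ((N:ℤ) - (j:ℕ) - m) (by push_cast; ring)
        have hcast : ((((N:ℤ) - ((j:ℕ):ℤ) - m) : ℤ) : ℂ) = (k:ℂ) := by
          push_cast
          linear_combination -hkc
        intro θ
        rw [h0 θ, hcast]
      obtain ⟨g, hgmem, hgeq⟩ := eigen_v a k (ψ j) hhom hrot'
      apply Submodule.subset_span
      refine ⟨k, ?_, g, hgmem, ?_⟩
      · by_cases hjN : (j : ℕ) ≤ N
        · refine ⟨N - (j : ℕ), by omega, Or.inl ?_⟩
          have hcast : ((N - (j : ℕ) : ℕ) : ℤ) = (N:ℤ) - ((j:ℕ):ℤ) := by omega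
          rw [hcast, _root_.abs_of_nonpos (by omega)]
          omega
        · refine ⟨(j : ℕ) - N, by omega, Or.inr ?_⟩
          have hcast : (((j : ℕ) - N : ℕ) : ℤ) = ((j:ℕ):ℤ) - (N:ℤ) := by omega
          rw [hcast, _root_.abs_of_nonpos (by omega)]
          omega
      · funext j'
        by_cases hjj : j' = j
        · rw [hjj, Pi.single_eq_same, if_pos (by omega)]
          exact hgeq
        · rw [Pi.single_eq_of_ne hjj, if_neg]
          intro hEq
          apply hjj
          apply Fin.ext
          omega
  · rw [Submodule.span_le]
    rintro ψ ⟨k, -, g, -, rfl⟩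
    exact gen_mem_v lam nu N a m hln k g

theorem statement4 (lam nu : ℂ) (N a : ℕ) (m : ℤ) (hm : (N : ℤ) ≤ |m|) :
    ((Hspace lam nu N m a ≠ ⊥) ↔ (nu - lam = (a : ℂ) ∧ |m| - (N : ℤ) ≤ (a : ℤ))) ∧
    (nu - lam = (a : ℂ) → |m| - (N : ℤ) ≤ (a : ℤ) →
      (((N : ℤ) ≤ m →
          Hspace lam nu N m a = Submodule.span ℂ
            {ψ : Fin (2 * N + 1) → MvPolynomial (Fin 3) ℂ |
              ∃ k : ℕ, KSet N m k ∧ ∃ g ∈ PolEven ((a : ℤ) - k),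
                ψ = fun j : Fin (2 * N + 1) =>
                  if ((j : ℕ) : ℤ) = (k : ℤ) - m + N then
                    Tmap ((a : ℤ) - k) g *
                      (MvPolynomial.X 0 + MvPolynomial.C Complex.I * MvPolynomial.X 1) ^ k
                  else 0}) ∧
       (m ≤ -(N : ℤ) →
          Hspace lam nu N m a = Submodule.span ℂ
            {ψ : Fin (2 * N + 1) → MvPolynomial (Fin 3) ℂ |
              ∃ k : ℕ, KSet N m k ∧ ∃ g ∈ PolEven ((a : ℤ) - k),
                ψ = fun j : Fin (2 * N + 1) =>
                  if ((j : ℕ) : ℤ) = (N : ℤ) - m - k then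
                    Tmap ((a : ℤ) - k) g *
                      (MvPolynomial.X 0 - MvPolynomial.C Complex.I * MvPolynomial.X 1) ^ k
                  else 0}))) := by
  have part2 : nu - lam = (a : ℂ) → (((N : ℤ) ≤ m →
      Hspace lam nu N m a = Submodule.span ℂ
        {ψ : Fin (2 * N + 1) → MvPolynomial (Fin 3) ℂ |
          ∃ k : ℕ, KSet N m k ∧ ∃ g ∈ PolEven ((a : ℤ) - k),
            ψ = fun j : Fin (2 * N + 1) =>
              if ((j : ℕ) : ℤ) = (k : ℤ) - m + N then
                Tmap ((a : ℤ) - k) g *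
                  (MvPolynomial.X 0 + MvPolynomial.C Complex.I * MvPolynomial.X 1) ^ k
              else 0}) ∧
     (m ≤ -(N : ℤ) →
      Hspace lam nu N m a = Submodule.span ℂ
        {ψ : Fin (2 * N + 1) → MvPolynomial (Fin 3) ℂ |
          ∃ k : ℕ, KSet N m k ∧ ∃ g ∈ PolEven ((a : ℤ) - k),
            ψ = fun j : Fin (2 * N + 1) =>
              if ((j : ℕ) : ℤ) = (N : ℤ) - m - k then
                Tmap ((a : ℤ) - k) g *
                  (MvPolynomial.X 0 - MvPolynomial.C Complex.I * MvPolynomial.X 1) ^ k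
              else 0})) := by
    intro hln
    exact ⟨fun hmN => span_eq_u lam nu N a m hmN hln,
           fun hmN => span_eq_v lam nu N a m hmN hln⟩
  refine ⟨⟨?_, ?_⟩, fun hln _ => part2 hln⟩
  · -- forward direction of the iff
    intro hne
    obtain ⟨ψ, hψmem, hψne⟩ := Submodule.exists_mem_ne_zero_of_ne_bot hne
    obtain ⟨j, hj0⟩ := Function.ne_iff.mp hψne
    rw [mem_Hspace_iff] at hψmem
    obtain ⟨hhom, hsc, hrot⟩ := hψmem j
    have hj2N : (j : ℕ) < 2 * N + 1 := j.isLt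
    constructor
    · -- nu - lam = a
      obtain ⟨s, hs⟩ := MvPolynomial.ne_zero_iff.mp hj0
      have key : ∀ t : ℝ, Complex.exp ((lam - nu + (a:ℂ)) * (t:ℂ)) = 1 := by
        intro t
        have h := hsc t
        rw [scaleSub_homog hhom t] at h
        have hc := congrArg (MvPolynomial.coeff s) h
        rw [MvPolynomial.coeff_smul, MvPolynomial.coeff_smul, MvPolynomial.coeff_smul,
          smul_eq_mul, smul_eq_mul, smul_eq_mul, ← mul_assoc] at hc
        have h2 := mul_right_cancel₀ hs hc
        rw [← Complex.exp_nat_mul, ← Complex.exp_add] at h2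
        rw [show ((lam - nu + (a:ℂ)) * (t:ℂ))
          = lam * (t:ℂ) + (-(nu * (t:ℂ) + (a:ℂ) * -(t:ℂ))) from by push_cast; ring]
        rw [Complex.exp_add, h2, ← Complex.exp_add, add_neg_cancel, Complex.exp_zero]
      have hz := exp_forall_eq_one key
      linear_combination -hz
    · -- the bound
      rcases le_or_gt 0 m with hm0 | hm0
      · have hmN : (N:ℤ) ≤ m := by rwa [_root_.abs_of_nonneg hm0] at hm
        set k : ℕ := (m - N + (j : ℕ)).toNat with hk
        have hkz : (k : ℤ) = m - (N:ℤ) + ((j : ℕ):ℤ) := Int.toNat_of_nonneg (by omega)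
        have hkc : (k : ℂ) = (m : ℂ) - (N : ℂ) + ((j : ℕ) : ℂ) := by exact_mod_cast hkz
        have hrot' : ∀ θ : ℝ, rotSub θ (ψ j)
            = Complex.exp (Complex.I * (-(k:ℂ)) * (θ:ℂ)) • ψ j := by
          have h0 := rot_flip hrot ((N:ℤ) - (j:ℕ) - m) (by push_cast; ring)
          have hcast : ((((N:ℤ) - ((j:ℕ):ℤ) - m) : ℤ) : ℂ) = -(k:ℂ) := by
            push_cast
            linear_combination hkc
          intro θ
          rw [h0 θ, hcast]
        obtain ⟨g, -, hgeq⟩ := eigen_u a k (ψ j) hhom hrot'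
        by_contra hlt
        have hneg : ((a:ℤ) - k) < 0 := by
          rw [_root_.abs_of_nonneg hm0] at hlt
          omega
        rw [Tmap, if_pos hneg, zero_mul] at hgeq
        exact hj0 hgeq
      · have hmN : m ≤ -(N:ℤ) := by
          rw [_root_.abs_of_nonpos (le_of_lt hm0)] at hm
          omega
        set k : ℕ := ((N:ℤ) - (j : ℕ) - m).toNat with hk
        have hkz : (k : ℤ) = (N:ℤ) - ((j : ℕ):ℤ) - m := Int.toNat_of_nonneg (by omega)
        have hkc : (k : ℂ) = (N : ℂ) - ((j : ℕ) : ℂ) - (m : ℂ) := by exact_mod_cast hkz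
        have hrot' : ∀ θ : ℝ, rotSub θ (ψ j)
            = Complex.exp (Complex.I * ((k:ℂ)) * (θ:ℂ)) • ψ j := by
          have h0 := rot_flip hrot ((N:ℤ) - (j:ℕ) - m) (by push_cast; ring)
          have hcast : ((((N:ℤ) - ((j:ℕ):ℤ) - m) : ℤ) : ℂ) = (k:ℂ) := by
            push_cast
            linear_combination -hkc
          intro θ
          rw [h0 θ, hcast]
        obtain ⟨g, -, hgeq⟩ := eigen_v a k (ψ j) hhom hrot'
        by_contra hlt
        have hneg : ((a:ℤ) - k) < 0 := by
          rw [_root_.abs_of_nonpos (le_of_lt hm0)] at hlt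
          omega
        rw [Tmap, if_pos hneg, zero_mul] at hgeq
        exact hj0 hgeq
  · -- backward direction of the iff
    rintro ⟨hln, hbd⟩
    rcases le_or_gt 0 m with hm0 | hm0
    · have hmN : (N:ℤ) ≤ m := by rwa [_root_.abs_of_nonneg hm0] at hm
      rw [span_eq_u lam nu N a m hmN hln, Submodule.ne_bot_iff]
      set k0 : ℕ := (m - N).toNat with hk0
      have hk0z : (k0:ℤ) = m - N := Int.toNat_of_nonneg (by omega)
      have hk0a : k0 ≤ a := by
        rw [_root_.abs_of_nonneg hm0] at hbd
        omega
      refine ⟨fun j : Fin (2 * N + 1) =>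
        if ((j : ℕ) : ℤ) = (k0 : ℤ) - m + N then
          Tmap ((a : ℤ) - k0) (Polynomial.X ^ (a - k0)) *
            (MvPolynomial.X 0 + MvPolynomial.C Complex.I * MvPolynomial.X 1) ^ k0
        else 0, ?_, ?_⟩
      · apply Submodule.subset_span
        refine ⟨k0, ⟨N, le_refl N, Or.inl (by rw [_root_.abs_of_nonneg (by omega)]; omega)⟩,
          Polynomial.X ^ (a - k0), ?_, rfl⟩
        apply Submodule.subset_span
        refine ⟨0, by omega, ?_⟩
        congr 1
        omega
      · intro hzero
        have h0 := congrFun hzero ⟨0, by omega⟩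
        rw [if_pos (by show ((0:ℕ):ℤ) = (k0 : ℤ) - m + (N:ℤ); omega)] at h0
        rw [show (a:ℤ) - k0 = ((a - k0 : ℕ):ℤ) from by omega, Tmap_X_pow] at h0
        exact mul_ne_zero (pow_ne_zero (a - k0) (MvPolynomial.X_ne_zero 2))
          (pow_ne_zero k0 u_ne_zero) h0
    · have hmN : m ≤ -(N:ℤ) := by
        rw [_root_.abs_of_nonpos (le_of_lt hm0)] at hm
        omega
      rw [span_eq_v lam nu N a m hmN hln, Submodule.ne_bot_iff]
      set k0 : ℕ := (-m - N).toNat with hk0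
      have hk0z : (k0:ℤ) = -m - N := Int.toNat_of_nonneg (by omega)
      have hk0a : k0 ≤ a := by
        rw [_root_.abs_of_nonpos (le_of_lt hm0)] at hbd
        omega
      refine ⟨fun j : Fin (2 * N + 1) =>
        if ((j : ℕ) : ℤ) = (N : ℤ) - m - k0 then
          Tmap ((a : ℤ) - k0) (Polynomial.X ^ (a - k0)) *
            (MvPolynomial.X 0 - MvPolynomial.C Complex.I * MvPolynomial.X 1) ^ k0
        else 0, ?_, ?_⟩
      · apply Submodule.subset_span
        refine ⟨k0, ⟨N, le_refl N, Or.inr (by rw [_root_.abs_of_nonpos (by omega)]; omega)⟩,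
          Polynomial.X ^ (a - k0), ?_, rfl⟩
        apply Submodule.subset_span
        refine ⟨0, by omega, ?_⟩
        congr 1
        omega
      · intro hzero
        have h0 := congrFun hzero ⟨2 * N, by omega⟩
        rw [if_pos (by show ((2 * N:ℕ):ℤ) = (N : ℤ) - m - (k0:ℤ); push_cast; omega)] at h0
        rw [show (a:ℤ) - k0 = ((a - k0 : ℕ):ℤ) from by omega, Tmap_X_pow] at h0
        exact mul_ne_zero (pow_ne_zero (a - k0) (MvPolynomial.X_ne_zero 2))
          (pow_ne_zero k0 v_ne_zero) h0


end
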